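/- arXiv:1506.07458 — 2 statements merged into one kernel-verified Lean document; each statement's English description precedes it below -/
import Mathlib

section
/- Let T be a complete binary tree whose 2^b leaves carry values v_0,...,v_{2^b-1} in a commutative idempotent monoid with max, and whose internal nodes each carry the max of their two children's labels. Then for any leaf index p, the search procedure that starts at the root and descends toward leaf p, accumulating the label of the left child whenever it moves to the right child, and finally accumulating the label of the node at which it stops (the first node on the path whose rightmost descendant is ≤ p), returns max_{0 ≤ j ≤ p} v_j. -/
/-! By induction on the depth, the descent from the node covering `[lo, lo + 2^h)` toward a
leaf `p` in that range returns the max of `v` over `[lo, p]`: a node whose range ends at `p`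
contributes its whole label, and moving right splits `[lo, p]` at `lo + 2^h`. -/

/-- The `getBestScore` descent in a complete binary tree of depth `h` whose node
rooted at leaves `[lo, lo + 2^h)` carries, at each internal node, the max of its
children's labels (hence the max of the leaf values below it, `(Finset.Ico …).sup v`).
The procedure descends toward leaf `p`: it stops at the first node whose rightmost
descendant is `≤ p` and returns its label; otherwise it moves to the left child when
the rightmost leaf under the left child is `≥ p`, and otherwise accumulates the left
child's label and moves to the right child. -/
def getBest (v : ℕ → ℕ) : ℕ → ℕ → ℕ → ℕ
  | 0, lo, _ => v lo
  | h + 1, lo, p =>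
    if lo + 2 ^ (h + 1) - 1 ≤ p then (Finset.Ico lo (lo + 2 ^ (h + 1))).sup v
    else if p ≤ lo + 2 ^ h - 1 then getBest v h lo p
    else max ((Finset.Ico lo (lo + 2 ^ h)).sup v) (getBest v h (lo + 2 ^ h) p)

theorem getBest_eq_sup_Ico (v : ℕ → ℕ) {h lo p : ℕ} (hlo : lo ≤ p) (hp : p < lo + 2 ^ h) :
    getBest v h lo p = (Finset.Ico lo (p + 1)).sup v := by
  induction h generalizing lo with
  | zero =>
    obtain rfl : p = lo := by omega
    simp [getBest]
  | succ h ih =>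
    have hpow : 2 ^ (h + 1) = 2 ^ h + 2 ^ h := by ring
    have hpos : 0 < 2 ^ h := Nat.two_pow_pos h
    rw [getBest]
    split_ifs with hstop hleft
    · congr 2
      omega
    · exact ih hlo (by omega)
    · rw [ih (by omega) (by omega), ← Finset.sup_union,
        Finset.Ico_union_Ico_eq_Ico (by omega) (by omega)]

/-- For a complete binary tree with `2^b` leaves carrying values `v 0, …, v (2^b - 1)`
and internal nodes labelled by the max of their children, the `getBestScore`
procedure started at the root returns `max_{0 ≤ j ≤ p} v j`. -/
theorem getBest_eq_prefix_max (b : ℕ) (v : ℕ → ℕ) (p : ℕ) (hp : p < 2 ^ b) :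
    getBest v b 0 p = (Finset.range (p + 1)).sup v := by
  rw [getBest_eq_sup_Ico v (Nat.zero_le p) (by omega), Finset.range_eq_Ico]
end

section
/- Let A be a finite set of pairs (p, v) ∈ ℕ × ℕ satisfying the staircase invariant: for any two pairs (p, v), (p', v') in A, p < p' implies v < v'. Insert a new pair (q, w) by: finding the pair (p, v) with largest p ≤ q; if w > v, removing all pairs (p'', v'') with p < p'' and v'' ≤ w, and inserting (q, w). Then the resulting set again satisfies the staircase invariant, and for every threshold r, max{ v : (p, v) ∈ A', p ≤ r } = max( max{ v : (p, v) ∈ A, p ≤ r }, w if q ≤ r else 0 ). -/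
/-- The staircase invariant of the line-sweep structure `A` (a finite set of
`(position, score)` pairs with strictly increasing scores along positions, one
pair per position). Inserting `(q, w)`: let `(p, v)` be the pair with largest
position `≤ q`; if `w > v`, remove every pair `(p'', v'')` with `p < p''` and
`v'' ≤ w` and insert `(q, w)`. The resulting set `A'` again satisfies the
staircase invariant, and for every threshold `r`,
`max{v : (p, v) ∈ A', p ≤ r} = max(max{v : (p, v) ∈ A, p ≤ r}, if q ≤ r then w else 0)`. -/
theorem staircase_insert (A : Finset (ℕ × ℕ)) (q w p v : ℕ)
    (hstair : ∀ e ∈ A, ∀ e' ∈ A, e.1 < e'.1 → e.2 < e'.2)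
    (hkey : ∀ e ∈ A, ∀ e' ∈ A, e.1 = e'.1 → e = e')
    (hpv : (p, v) ∈ A) (hpq : p ≤ q)
    (hmax : ∀ e ∈ A, e.1 ≤ q → e.1 ≤ p)
    (hw : v < w) :
    (∀ e ∈ insert (q, w) (A.filter fun e => ¬(p < e.1 ∧ e.2 ≤ w)),
      ∀ e' ∈ insert (q, w) (A.filter fun e => ¬(p < e.1 ∧ e.2 ≤ w)),
        e.1 < e'.1 → e.2 < e'.2) ∧
    (∀ r : ℕ,
      ((insert (q, w) (A.filter fun e => ¬(p < e.1 ∧ e.2 ≤ w))).filter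
        (fun e => e.1 ≤ r)).sup (fun e => e.2) =
      max ((A.filter fun e => e.1 ≤ r).sup (fun e => e.2))
        (if q ≤ r then w else 0)) := by
  constructor
  · intro e he e' he' hlt
    simp only [Finset.mem_insert, Finset.mem_filter] at he he'
    rcases he with he | ⟨heA, heF⟩ <;> rcases he' with he' | ⟨he'A, he'F⟩
    · subst he; subst he'; omega
    · subst he
      push_neg at he'F
      have hp : p < e'.1 := lt_of_le_of_lt hpq hlt
      have := he'F hp
      omega
    · subst he'
      have h1 : e.1 ≤ p := hmax e heA (le_of_lt hlt)
      rcases lt_or_eq_of_le h1 with h | h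
      · have := hstair e heA (p, v) hpv h
        omega
      · have := hkey e heA (p, v) hpv h
        rw [this]; exact hw
    · exact hstair e heA e' he'A hlt
  · intro r
    by_cases hqr : q ≤ r
    · rw [if_pos hqr, Finset.filter_insert, if_pos hqr, Finset.sup_insert]
      apply le_antisymm
      · apply sup_le
        · exact le_max_right _ _
        · apply le_max_of_le_left
          apply Finset.sup_le
          intro e he
          simp only [Finset.mem_filter] at he
          refine Finset.le_sup (f := fun e : ℕ × ℕ => e.2) (b := e) ?_
          simp only [Finset.mem_filter]
          exact ⟨he.1.1, he.2⟩
      · apply max_le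
        · apply Finset.sup_le
          intro e he
          simp only [Finset.mem_filter] at he
          by_cases hrem : p < e.1 ∧ e.2 ≤ w
          · exact le_trans hrem.2 le_sup_left
          · refine le_trans ?_ le_sup_right
            refine Finset.le_sup (f := fun e : ℕ × ℕ => e.2) (b := e) ?_
            simp only [Finset.mem_filter]
            exact ⟨⟨he.1, hrem⟩, he.2⟩
        · exact le_sup_left
    · rw [if_neg hqr, Finset.filter_insert, if_neg hqr, Nat.max_zero]
      congr 1
      ext e
      simp only [Finset.mem_filter]
      constructor
      · rintro ⟨⟨heA, -⟩, hr⟩; exact ⟨heA, hr⟩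
      · rintro ⟨heA, hr⟩
        have := hmax e heA (by omega)
        exact ⟨⟨heA, by omega⟩, hr⟩
end
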